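/- The rainbow vector v_{∩∩_N} = (1/(q^{-2}-1)^N)·([2]^N/[N+1]!)·∑_{l=0}^N (-1)^l q^{l(N-l-1)} (θ_l^{(N)} ⊗ θ_{N-l}^{(N)}) ∈ M_2^{⊗2N} satisfies E.v_{∩∩_N} = 0 and K.v_{∩∩_N} = v_{∩∩_N}. -/

import Mathlib

open Finset

noncomputable section

/-- The weight (number of `1`s) of a basis index of `M₂^{⊗n}`: here `M₂^{⊗n}` is modelled
concretely as functions `(Fin n → Fin 2) → ℂ` on the set of basis index tuples. -/
def wt {n : ℕ} (g : Fin n → Fin 2) : ℕ := ∑ i, (g i : ℕ)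

/-- The action of `K` on `M₂^{⊗n}`: `K.e_f = q^{n - 2·wt f}·e_f`. -/
def Kact (q : ℂ) (n : ℕ) (v : (Fin n → Fin 2) → ℂ) : (Fin n → Fin 2) → ℂ :=
  fun g => q ^ ((n : ℤ) - 2 * (wt g : ℤ)) * v g

/-- The action of `E` on `M₂^{⊗n}` via the iterated coproduct
`Δ⁽ⁿ⁾(E) = ∑ᵢ 1⊗⋯⊗1⊗E⊗K⊗⋯⊗K` (slot `0` rightmost). -/
def Eact (q : ℂ) (n : ℕ) (v : (Fin n → Fin 2) → ℂ) : (Fin n → Fin 2) → ℂ :=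
  fun g => ∑ i ∈ Finset.univ.filter (fun i => g i = 0),
    q ^ (∑ j ∈ Finset.univ.filter (fun j => j < i), ((1 : ℤ) - 2 * ((g j : ℕ) : ℤ))) *
      v (Function.update g i 1)

/-- The action of `F` on `M₂^{⊗n}` via `Δ⁽ⁿ⁾(F) = ∑ᵢ K⁻¹⊗⋯⊗K⁻¹⊗F⊗1⊗⋯⊗1`. -/
def Fdown (q : ℂ) (n : ℕ) (v : (Fin n → Fin 2) → ℂ) : (Fin n → Fin 2) → ℂ :=
  fun g => ∑ i ∈ Finset.univ.filter (fun i => g i = 1),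
    q ^ (-∑ j ∈ Finset.univ.filter (fun j => i < j), ((1 : ℤ) - 2 * ((g j : ℕ) : ℤ))) *
      v (Function.update g i 0)

/-- The highest weight vector `e₀ ⊗ ⋯ ⊗ e₀` of `M₂^{⊗n}`. -/
def delta0 (n : ℕ) : (Fin n → Fin 2) → ℂ := fun g => if g = fun _ => 0 then 1 else 0

/-- `θ_l^{(n)} = F^l.(e₀ ⊗ ⋯ ⊗ e₀)`, spanning the weight spaces of the irreducible
subrepresentation `M_{n+1} ⊂ M₂^{⊗n}` generated by `e₀ ⊗ ⋯ ⊗ e₀`. -/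
def theta (q : ℂ) (n l : ℕ) : (Fin n → Fin 2) → ℂ := (Fdown q n)^[l] (delta0 n)

/-- The condition `π̂_j(v) = 0`, where the singlet functional `π̂` is applied at the two
consecutive tensor slots `a` and `b` (with `b = a + 1`), using the values
`π̂(e₀⊗e₀) = π̂(e₁⊗e₁) = 0`, `π̂(e₀⊗e₁) = (q⁻¹-q)/[2]`, `π̂(e₁⊗e₀) = (1-q⁻²)/[2]`
(the left tensor factor is the higher slot `b`). -/
def PihatZero (q : ℂ) (n : ℕ) (a b : Fin n) (v : (Fin n → Fin 2) → ℂ) : Prop :=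
  ∀ g : Fin n → Fin 2,
    ((q⁻¹ - q) / (q + q⁻¹)) * v (Function.update (Function.update g b 0) a 1) +
      ((1 - q⁻¹ ^ 2) / (q + q⁻¹)) * v (Function.update (Function.update g b 1) a 0) = 0


/-- The q-integer `[m]`. -/
def qint (q : ℂ) (m : ℤ) : ℂ := (q ^ m - q ^ (-m)) / (q - q⁻¹)

/-- The q-factorial `[n]! = [n][n-1]⋯[2][1]`. -/
def qfact (q : ℂ) (n : ℕ) : ℂ := ∏ k ∈ Finset.range n, qint q ((k : ℤ) + 1)

/-- The rainbow vector
`v_{∩∩_N} = (1/(q⁻²-1)^N)·([2]^N/[N+1]!)·∑_{l=0}^N (-1)^l q^{l(N-l-1)} (θ_l^{(N)} ⊗ θ_{N-l}^{(N)})`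
in `M₂^{⊗2N}`, where the left tensor factor `θ_l^{(N)}` occupies the `N` higher slots. -/
def rainbowVec (q : ℂ) (N : ℕ) : (Fin (2 * N) → Fin 2) → ℂ :=
  (((q ^ (-2 : ℤ) - 1) ^ N)⁻¹ * (q + q⁻¹) ^ N / qfact q (N + 1)) •
    ∑ l ∈ Finset.range (N + 1),
      ((-1 : ℂ) ^ l * q ^ ((l : ℤ) * ((N : ℤ) - (l : ℤ) - 1))) •
        (fun g : Fin (2 * N) → Fin 2 =>
          theta q N l (fun i : Fin N => g ⟨(i : ℕ) + N, by have := i.isLt; omega⟩) *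
            theta q N (N - l) (fun i : Fin N => g ⟨(i : ℕ), by have := i.isLt; omega⟩))

/-! Every `θ_m` lies in the weight space of weight `m`, on which `[E, F]` acts by `[n - 2m]`;
from `θ_{m+1} = F θ_m` and `E θ_0 = 0` this gives `E θ_m = [m][n+1-m] θ_{m-1}`, the identity
`[m][n+1-m] + [n-2m] = [m+1][n-m]` carrying the induction. With `Δ(E) = E ⊗ K + 1 ⊗ E`, the image
`E(θ_l ⊗ θ_{N-l})` is a combination of `θ_l ⊗ θ_{N-l-1}` and `θ_{l-1} ⊗ θ_{N-l}`, and the recursion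
`c_{l+1} q^{2(l+1)-N} = -c_l` makes `∑ c_l E(θ_l ⊗ θ_{N-l})` telescope to `0`. Every summand has
weight `N` in `M₂^{⊗2N}`, where `K` acts by `q^0 = 1`. -/

open Function

section SlotWeights

variable {n : ℕ}

def slotWt (g : Fin n → Fin 2) (j : Fin n) : ℤ := 1 - 2 * ((g j : ℕ) : ℤ)

/-- The `K`-weight of the slots below `k`: `Δ⁽ⁿ⁾(E)` puts `K` on each of them. -/
def wtBelow (g : Fin n → Fin 2) (k : ℕ) : ℤ :=
  ∑ j ∈ univ.filter (fun j : Fin n => (j : ℕ) < k), slotWt g j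

lemma slotWt_eq_one_or_neg_one (g : Fin n → Fin 2) (j : Fin n) :
    slotWt g j = 1 ∨ slotWt g j = -1 := by
  unfold slotWt
  rcases Fin.exists_fin_two.mp ⟨g j, rfl⟩ with h | h <;> simp [h]

lemma wtBelow_zero (g : Fin n → Fin 2) : wtBelow g 0 = 0 := by
  simp [wtBelow]

lemma wtBelow_succ (g : Fin n → Fin 2) (i : Fin n) :
    wtBelow g (i + 1) = wtBelow g i + slotWt g i := by
  have : univ.filter (fun j : Fin n => (j : ℕ) < i + 1)
      = insert i (univ.filter fun j : Fin n => (j : ℕ) < i) := by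
    ext j
    simp only [mem_filter, mem_univ, true_and, mem_insert, Fin.ext_iff]
    omega
  rw [wtBelow, this, sum_insert (by simp), add_comm]
  rfl

lemma wtBelow_of_le (g : Fin n → Fin 2) {k : ℕ} (hk : n ≤ k) : wtBelow g k = n - 2 * wt g := by
  rw [wtBelow, filter_true_of_mem fun j _ => j.isLt.trans_le hk]
  simp [slotWt, wt, sum_sub_distrib, mul_sum]

lemma wtBelow_update (g : Fin n → Fin 2) (i : Fin n) (a : Fin 2) (k : ℕ) :
    wtBelow (update g i a) k
      = wtBelow g k + if (i : ℕ) < k then 2 * (((g i : ℕ) : ℤ) - (a : ℕ)) else 0 := by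
  simp only [wtBelow, sum_filter]
  rw [← sum_erase_add _ _ (mem_univ i),
    ← sum_erase_add _ (fun j : Fin n => if (j : ℕ) < k then slotWt g j else 0) (mem_univ i),
    sum_congr rfl fun j hj => by rw [slotWt, update_of_ne (ne_of_mem_erase hj)]]
  simp only [slotWt, update_self]
  split_ifs <;> ring

lemma wtBelow_update_one {g : Fin n → Fin 2} {i : Fin n} (hgi : g i = 0) (k : ℕ) :
    wtBelow (update g i 1) k = wtBelow g k - if (i : ℕ) < k then 2 else 0 := by
  rw [wtBelow_update, hgi]
  split_ifs <;> simp [sub_eq_add_neg]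

lemma wtBelow_update_zero {g : Fin n → Fin 2} {i : Fin n} (hgi : g i = 1) (k : ℕ) :
    wtBelow (update g i 0) k = wtBelow g k + if (i : ℕ) < k then 2 else 0 := by
  rw [wtBelow_update, hgi]
  split_ifs <;> simp [sub_eq_add_neg]

lemma wt_update (g : Fin n → Fin 2) (i : Fin n) (a : Fin 2) :
    (wt (update g i a) : ℤ) = wt g - (g i : ℕ) + (a : ℕ) := by
  have := wtBelow_update g i a n
  simp only [wtBelow_of_le _ le_rfl, i.isLt, if_true] at this
  linarith

end SlotWeights

lemma filter_update_eq_insert {α β : Type*} [Fintype α] [DecidableEq α] [DecidableEq β]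
    (g : α → β) (i : α) (a : β) :
    univ.filter (fun k => update g i a k = a) = insert i (univ.filter fun k => g k = a) := by
  ext k
  by_cases h : k = i <;> simp [h]

section Commutator

variable {n : ℕ} (q : ℂ)

lemma Eact_apply (v : (Fin n → Fin 2) → ℂ) (g : Fin n → Fin 2) :
    Eact q n v g = ∑ i ∈ univ.filter (fun i => g i = 0), q ^ wtBelow g i * v (update g i 1) :=
  rfl

lemma Fdown_apply (v : (Fin n → Fin 2) → ℂ) (g : Fin n → Fin 2) :
    Fdown q n v g = ∑ i ∈ univ.filter (fun i => g i = 1),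
      q ^ (wtBelow g (i + 1) - wtBelow g n) * v (update g i 0) := by
  refine sum_congr rfl fun i _ => ?_
  have hsplit := sum_filter_add_sum_filter_not univ (fun j : Fin n => (j : ℕ) < i + 1) (slotWt g)
  have habove : univ.filter (fun j : Fin n => ¬ (j : ℕ) < i + 1) = univ.filter (i < ·) := by
    ext j
    simp only [mem_filter, mem_univ, true_and, Fin.lt_def]
    omega
  have htotal : wtBelow g n = ∑ j, slotWt g j := by
    rw [wtBelow, filter_true_of_mem fun j _ => j.isLt]
  have hsum_above : ∑ j ∈ univ.filter (i < ·), slotWt g j = wtBelow g n - wtBelow g (i + 1) := by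
    rw [habove] at hsplit
    rw [htotal, ← hsplit, wtBelow]
    ring
  show q ^ (-∑ j ∈ univ.filter (i < ·), slotWt g j) * _ = _
  rw [hsum_above, neg_sub]

lemma sub_inv_mul_zpow (hq : q ≠ 0) (x : ℤ) : (q - q⁻¹) * q ^ x = q ^ (x + 1) - q ^ (x - 1) := by
  rw [zpow_add_one₀ hq, zpow_sub_one₀ hq]
  ring

lemma sub_inv_mul_sum_slotWt (hq : q ≠ 0) (g : Fin n → Fin 2) :
    (q - q⁻¹) * ∑ i, (slotWt g i : ℂ) * q ^ (wtBelow g i + wtBelow g (i + 1) - wtBelow g n)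
      = q ^ wtBelow g n - q ^ (-wtBelow g n) := by
  set D : ℕ → ℂ := fun k => q ^ (2 * wtBelow g k - wtBelow g n)
  have step (i : Fin n) : (q - q⁻¹) * ((slotWt g i : ℂ) *
      q ^ (wtBelow g i + wtBelow g (i + 1) - wtBelow g n)) = D (i + 1) - D i := by
    simp only [D, wtBelow_succ]
    rcases slotWt_eq_one_or_neg_one g i with h | h <;>
      rw [h, mul_left_comm, sub_inv_mul_zpow q hq] <;> push_cast <;> ring_nf
  rw [mul_sum, sum_congr rfl fun i _ => step i,
    Fin.sum_univ_eq_sum_range (fun k => D (k + 1) - D k), sum_range_sub]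
  simp only [D, wtBelow_zero]
  ring_nf

lemma sum_zero_sub_sum_one_eq_qint (hq : q ≠ 0) (hq2 : q - q⁻¹ ≠ 0) (g : Fin n → Fin 2) :
    ∑ i ∈ univ.filter (fun i => g i = 0), q ^ (wtBelow g i + wtBelow g (i + 1) - wtBelow g n)
      - ∑ i ∈ univ.filter (fun i => g i = 1), q ^ (wtBelow g i + wtBelow g (i + 1) - wtBelow g n)
      = qint q (n - 2 * wt g) := by
  have hone : univ.filter (fun i => ¬ g i = 0) = univ.filter (fun i => g i = 1) := by
    ext i
    rcases Fin.exists_fin_two.mp ⟨g i, rfl⟩ with h | h <;> simp [h]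
  have hsum := sum_filter_add_sum_filter_not univ (fun i => g i = 0)
    fun i => (slotWt g i : ℂ) * q ^ (wtBelow g i + wtBelow g (i + 1) - wtBelow g n)
  rw [hone] at hsum
  rw [qint, ← wtBelow_of_le g le_rfl, eq_div_iff hq2, mul_comm, ← sub_inv_mul_sum_slotWt q hq,
    ← hsum]
  congr 1
  rw [sub_eq_add_neg, ← sum_neg_distrib]
  congr 1 <;> refine sum_congr rfl fun i hi => ?_ <;> simp [slotWt, (mem_filter.mp hi).2]

/-- The term of `E F` and of `F E` that raises slot `i` and lowers slot `k ≠ i`. -/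
def crossTerm (v : (Fin n → Fin 2) → ℂ) (g : Fin n → Fin 2) (i k : Fin n) : ℂ :=
  q ^ (wtBelow g i + wtBelow g (k + 1) - wtBelow g n + if (k : ℕ) < i then 2 else 0) *
    v (update (update g i 1) k 0)

lemma Eact_Fdown_apply_eq_sum (hq : q ≠ 0) (v : (Fin n → Fin 2) → ℂ) (g : Fin n → Fin 2) :
    Eact q n (Fdown q n v) g = ∑ i ∈ univ.filter (fun i => g i = 0),
      (q ^ (wtBelow g i + wtBelow g (i + 1) - wtBelow g n) * v g
        + ∑ k ∈ univ.filter (fun k => g k = 1), crossTerm q v g i k) := by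
  rw [Eact_apply]
  refine sum_congr rfl fun i hi => ?_
  have hgi : g i = 0 := (mem_filter.mp hi).2
  have hg : update g i 0 = g := update_eq_self_iff.mpr hgi.symm
  rw [Fdown_apply, filter_update_eq_insert, sum_insert (by simp [hgi]), update_idem, hg,
    mul_add, mul_sum, ← mul_assoc, ← zpow_add₀ hq]
  congr 1
  · congr 2
    rw [wtBelow_update_one hgi, wtBelow_update_one hgi, if_pos (Nat.lt_succ_self _), if_pos i.isLt]
    ring
  · refine sum_congr rfl fun k hk => ?_
    have hik : (i : ℕ) ≠ k := fun h => by simp [← Fin.ext h, hgi] at hk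
    rw [← mul_assoc, ← zpow_add₀ hq, crossTerm]
    congr 2
    rw [wtBelow_update_one hgi, wtBelow_update_one hgi, if_pos i.isLt]
    split_ifs <;> omega

lemma Fdown_Eact_apply_eq_sum (hq : q ≠ 0) (v : (Fin n → Fin 2) → ℂ) (g : Fin n → Fin 2) :
    Fdown q n (Eact q n v) g = ∑ k ∈ univ.filter (fun k => g k = 1),
      (q ^ (wtBelow g k + wtBelow g (k + 1) - wtBelow g n) * v g
        + ∑ i ∈ univ.filter (fun i => g i = 0), crossTerm q v g i k) := by
  rw [Fdown_apply]
  refine sum_congr rfl fun k hk => ?_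
  have hgk : g k = 1 := (mem_filter.mp hk).2
  have hg : update g k 1 = g := update_eq_self_iff.mpr hgk.symm
  rw [Eact_apply, filter_update_eq_insert, sum_insert (by simp [hgk]), update_idem, hg,
    mul_add, mul_sum, ← mul_assoc, ← zpow_add₀ hq]
  congr 1
  · congr 2
    rw [wtBelow_update_zero hgk, if_neg (lt_irrefl _)]
    ring
  · refine sum_congr rfl fun i hi => ?_
    have hik : i ≠ k := fun h => by simp [h, hgk] at hi
    rw [← mul_assoc, ← zpow_add₀ hq, update_comm hik.symm, crossTerm]
    congr 2
    rw [wtBelow_update_zero hgk]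
    ring

lemma Eact_Fdown_apply (hq : q ≠ 0) (hq2 : q - q⁻¹ ≠ 0) (v : (Fin n → Fin 2) → ℂ)
    (g : Fin n → Fin 2) :
    Eact q n (Fdown q n v) g = Fdown q n (Eact q n v) g + qint q (n - 2 * wt g) * v g := by
  rw [Eact_Fdown_apply_eq_sum q hq, Fdown_Eact_apply_eq_sum q hq, sum_add_distrib,
    sum_add_distrib, sum_comm (s := univ.filter fun k => g k = 1), ← sum_mul, ← sum_mul,
    ← sum_zero_sub_sum_one_eq_qint q hq hq2 g]
  ring

end Commutator

section Theta

variable {n : ℕ} (q : ℂ)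

@[simp] lemma qint_zero : qint q 0 = 0 := by simp [qint]

lemma qint_mul_qint_add_qint (hq : q ≠ 0) (a m : ℤ) :
    qint q m * qint q (a + 1 - m) + qint q (a - 2 * m) = qint q (m + 1) * qint q (a - m) := by
  have ha : q ^ a ≠ 0 := zpow_ne_zero a hq
  have hm : q ^ m ≠ 0 := zpow_ne_zero m hq
  have e1 : q ^ (a + 1 - m) = q ^ a * q / q ^ m := by
    rw [zpow_sub₀ hq, zpow_add_one₀ hq]
  have e2 : q ^ (a - 2 * m) = q ^ a / (q ^ m * q ^ m) := by
    rw [zpow_sub₀ hq, two_mul, zpow_add₀ hq]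
  simp only [qint, zpow_neg, e1, e2, zpow_add_one₀ hq, zpow_sub₀ hq]
  field_simp
  ring

def wtSpace (n m : ℕ) : Submodule ℂ ((Fin n → Fin 2) → ℂ) where
  carrier := {v | ∀ g, wt g ≠ m → v g = 0}
  add_mem' hu hv g hg := by simp [hu g hg, hv g hg]
  zero_mem' _ _ := rfl
  smul_mem' _ _ hv g hg := by simp [hv g hg]

variable {q} in
lemma Kact_of_mem_wtSpace {m : ℕ} {v : (Fin n → Fin 2) → ℂ} (hv : v ∈ wtSpace n m) :
    Kact q n v = q ^ ((n : ℤ) - 2 * m) • v := by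
  ext g
  by_cases hg : wt g = m
  · simp [Kact, hg]
  · simp [Kact, hv g hg]

lemma Fdown_mem_wtSpace {m : ℕ} {v : (Fin n → Fin 2) → ℂ} (hv : v ∈ wtSpace n m) :
    Fdown q n v ∈ wtSpace n (m + 1) := by
  intro g hg
  refine sum_eq_zero fun i hi => ?_
  have hwt := wt_update g i 0
  rw [(mem_filter.mp hi).2] at hwt
  rw [hv _ (by omega), mul_zero]

lemma Fdown_smul (c : ℂ) (v : (Fin n → Fin 2) → ℂ) : Fdown q n (c • v) = c • Fdown q n v := by
  ext g
  simp [Fdown, mul_sum, mul_left_comm]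

lemma Eact_smul (c : ℂ) (v : (Fin n → Fin 2) → ℂ) :
    Eact q n (c • v) = c • Eact q n v := by
  ext g; simp [Eact, mul_sum, mul_left_comm]

lemma Eact_sum {ι : Type*} (s : Finset ι) (v : ι → (Fin n → Fin 2) → ℂ) :
    Eact q n (∑ l ∈ s, v l) = ∑ l ∈ s, Eact q n (v l) := by
  ext g; simp only [Eact, Finset.sum_apply, mul_sum]; exact sum_comm

lemma theta_succ (m : ℕ) : theta q n (m + 1) = Fdown q n (theta q n m) :=
  iterate_succ_apply' _ _ _

lemma theta_mem_wtSpace (m : ℕ) : theta q n m ∈ wtSpace n m := by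
  induction m with
  | zero =>
    intro g hg
    have : g ≠ fun _ => 0 := by rintro rfl; simp [wt] at hg
    simp [theta, delta0, this]
  | succ m ih =>
    rw [theta_succ]
    exact Fdown_mem_wtSpace q ih

lemma Eact_Fdown_of_mem_wtSpace (hq : q ≠ 0) (hq2 : q - q⁻¹ ≠ 0) {m : ℕ}
    {v : (Fin n → Fin 2) → ℂ} (hv : v ∈ wtSpace n m) :
    Eact q n (Fdown q n v) = Fdown q n (Eact q n v) + qint q (n - 2 * m) • v := by
  ext g
  rw [Eact_Fdown_apply q hq hq2]
  by_cases hg : wt g = m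
  · simp [hg]
  · simp [hv g hg]

lemma Eact_theta_zero : Eact q n (theta q n 0) = 0 := by
  ext g
  refine sum_eq_zero fun i _ => ?_
  have : update g i 1 ≠ fun _ => 0 := fun h => by simpa using congrFun h i
  simp [theta, delta0, this]

/-- At `m = 0` the truncated `m - 1` is harmless: the coefficient `[0]` vanishes. -/
lemma Eact_theta (hq : q ≠ 0) (hq2 : q - q⁻¹ ≠ 0) (m : ℕ) :
    Eact q n (theta q n m) = (qint q m * qint q (n + 1 - m)) • theta q n (m - 1) := by
  induction m with
  | zero => simp [Eact_theta_zero]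
  | succ m ih =>
    have hF : (qint q m * qint q (n + 1 - m)) • Fdown q n (theta q n (m - 1))
        = (qint q m * qint q (n + 1 - m)) • theta q n m := by
      rcases m with _ | m
      · simp
      · rw [Nat.add_sub_cancel, ← theta_succ]
    rw [theta_succ, Eact_Fdown_of_mem_wtSpace q hq hq2 (theta_mem_wtSpace q m), ih, Fdown_smul,
      hF, ← add_smul, qint_mul_qint_add_qint q hq, Nat.add_sub_cancel]
    push_cast
    ring_nf

end Theta

section Halves

variable {N : ℕ}

def lowSlot (N : ℕ) (i : Fin N) : Fin (2 * N) := ⟨i, by omega⟩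

def highSlot (N : ℕ) (i : Fin N) : Fin (2 * N) := ⟨i + N, by omega⟩

@[simp] lemma val_lowSlot (i : Fin N) : (lowSlot N i : ℕ) = i := rfl

@[simp] lemma val_highSlot (i : Fin N) : (highSlot N i : ℕ) = i + N := rfl

lemma lowSlot_injective : Injective (lowSlot N) := fun i j h => by
  simpa [lowSlot, Fin.ext_iff] using h

lemma highSlot_injective : Injective (highSlot N) := fun i j h => by
  simpa [highSlot, Fin.ext_iff] using h

lemma lowSlot_ne_highSlot (i j : Fin N) : lowSlot N i ≠ highSlot N j := by
  simp [lowSlot, highSlot, Fin.ext_iff]; omega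

lemma sum_fin_two_mul {M : Type*} [AddCommMonoid M] (f : Fin (2 * N) → M) :
    ∑ i, f i = ∑ i, f (lowSlot N i) + ∑ i, f (highSlot N i) := by
  rw [← (finCongr (two_mul N)).symm.sum_comp, Fin.sum_univ_add]
  congr 1
  exact sum_congr rfl fun i _ => congrArg f (Fin.ext (by simp [highSlot, add_comm]))

lemma wt_eq_wt_lowSlot_add_wt_highSlot (g : Fin (2 * N) → Fin 2) :
    wt g = wt (g ∘ lowSlot N) + wt (g ∘ highSlot N) :=
  sum_fin_two_mul _

lemma wtBelow_eq_lowSlot_add_highSlot (g : Fin (2 * N) → Fin 2) (k : ℕ) :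
    wtBelow g k = wtBelow (g ∘ lowSlot N) k + wtBelow (g ∘ highSlot N) (k - N) := by
  simp only [wtBelow, sum_filter]
  rw [sum_fin_two_mul]
  congr 1
  refine sum_congr rfl fun j _ => ?_
  simp only [highSlot]
  congr 1
  exact propext (by omega)

def tensor (u w : (Fin N → Fin 2) → ℂ) : (Fin (2 * N) → Fin 2) → ℂ :=
  fun g => u (g ∘ highSlot N) * w (g ∘ lowSlot N)

lemma Eact_tensor (q : ℂ) (hq : q ≠ 0) (u w : (Fin N → Fin 2) → ℂ) :
    Eact q (2 * N) (tensor u w) = tensor u (Eact q N w) + tensor (Eact q N u) (Kact q N w) := by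
  ext g
  rw [Pi.add_apply, tensor, tensor, Eact_apply, sum_filter, sum_fin_two_mul, Eact_apply,
    Eact_apply, sum_filter, sum_filter, mul_sum, sum_mul]
  congr 1 <;> refine sum_congr rfl fun i _ => ?_
  · have hiN : (i : ℕ) - N = 0 := by omega
    simp only [comp_apply, tensor, wtBelow_eq_lowSlot_add_highSlot g, val_lowSlot, hiN,
      wtBelow_zero, add_zero, update_comp_eq_of_injective _ lowSlot_injective,
      update_comp_eq_of_forall_ne _ _ fun j => (lowSlot_ne_highSlot i j).symm]
    split_ifs <;> ring
  · simp only [comp_apply, tensor, Kact, wtBelow_eq_lowSlot_add_highSlot g, val_highSlot,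
      Nat.add_sub_cancel, wtBelow_of_le _ (Nat.le_add_left N i), zpow_add₀ hq,
      update_comp_eq_of_injective _ highSlot_injective,
      update_comp_eq_of_forall_ne _ _ fun j => lowSlot_ne_highSlot j i]
    split_ifs <;> ring

lemma tensor_smul_left (c : ℂ) (u w : (Fin N → Fin 2) → ℂ) :
    tensor (c • u) w = c • tensor u w := by
  ext g; simp [tensor, mul_assoc]

lemma tensor_smul_right (c : ℂ) (u w : (Fin N → Fin 2) → ℂ) :
    tensor u (c • w) = c • tensor u w := by
  ext g; simp [tensor, mul_left_comm]

lemma tensor_mem_wtSpace {a b : ℕ} {u w : (Fin N → Fin 2) → ℂ} (hu : u ∈ wtSpace N a)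
    (hw : w ∈ wtSpace N b) : tensor u w ∈ wtSpace (2 * N) (a + b) := by
  intro g hg
  rw [wt_eq_wt_lowSlot_add_wt_highSlot] at hg
  by_cases ha : wt (g ∘ highSlot N) = a
  · have hb : wt (g ∘ lowSlot N) ≠ b := by omega
    simp [tensor, hw _ hb]
  · simp [tensor, hu _ ha]

end Halves

section Rainbow

variable (q : ℂ) (N : ℕ)

def rainbowCoeff (l : ℕ) : ℂ := (-1) ^ l * q ^ ((l : ℤ) * ((N : ℤ) - l - 1))

lemma rainbowCoeff_succ_mul (hq : q ≠ 0) (l : ℕ) :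
    rainbowCoeff q N (l + 1) * q ^ (2 * ((l : ℤ) + 1) - N) = -rainbowCoeff q N l := by
  rw [rainbowCoeff, rainbowCoeff, mul_assoc, ← zpow_add₀ hq, pow_succ]
  push_cast
  rw [show ((l : ℤ) + 1) * (N - (l + 1) - 1) + (2 * (l + 1) - N) = l * (N - l - 1) by ring]
  ring

lemma rainbowVec_eq : rainbowVec q N =
    (((q ^ (-2 : ℤ) - 1) ^ N)⁻¹ * (q + q⁻¹) ^ N / qfact q (N + 1)) •
      ∑ l ∈ range (N + 1), rainbowCoeff q N l • tensor (theta q N l) (theta q N (N - l)) :=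
  rfl

lemma rainbowVec_mem_wtSpace : rainbowVec q N ∈ wtSpace (2 * N) N := by
  rw [rainbowVec_eq]
  refine Submodule.smul_mem _ _ (Submodule.sum_mem _ fun l hl => Submodule.smul_mem _ _ ?_)
  have := tensor_mem_wtSpace (N := N) (theta_mem_wtSpace q l) (theta_mem_wtSpace q (N - l))
  rwa [Nat.add_sub_cancel' (Nat.lt_succ_iff.mp (mem_range.mp hl))] at this

def rainbowTelescope (l : ℕ) : (Fin (2 * N) → Fin 2) → ℂ :=
  (rainbowCoeff q N l * qint q l * qint q (N + 1 - l) * q ^ (2 * (l : ℤ) - N)) •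
    tensor (theta q N (l - 1)) (theta q N (N - l))

lemma rainbowCoeff_smul_Eact_tensor_theta (hq : q ≠ 0) (hq2 : q - q⁻¹ ≠ 0) {l : ℕ} (hl : l ≤ N) :
    rainbowCoeff q N l • Eact q (2 * N) (tensor (theta q N l) (theta q N (N - l)))
      = rainbowTelescope q N l - rainbowTelescope q N (l + 1) := by
  have e1 : ((N - l : ℕ) : ℤ) = N - l := by omega
  have e2 : (N : ℤ) + 1 - (N - l) = l + 1 := by ring
  have e3 : (N : ℤ) - 2 * (N - l) = 2 * l - N := by ring
  have e4 : (N : ℤ) + 1 - ((l + 1 : ℕ) : ℤ) = N - l := by push_cast; ring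
  have hcoeff : rainbowCoeff q N l * (qint q (N - l) * qint q (l + 1))
      = -(rainbowCoeff q N (l + 1) * qint q ((l + 1 : ℕ) : ℤ) * qint q (N - l)
          * q ^ (2 * ((l + 1 : ℕ) : ℤ) - N)) := by
    push_cast
    linear_combination qint q (l + 1) * qint q (N - l) * rainbowCoeff_succ_mul q N hq l
  rw [Eact_tensor q hq, Eact_theta q hq hq2, Eact_theta q hq hq2,
    Kact_of_mem_wtSpace (theta_mem_wtSpace q _), tensor_smul_left, tensor_smul_right,
    tensor_smul_right, rainbowTelescope, rainbowTelescope, Nat.sub_sub, Nat.add_sub_cancel,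
    e1, e2, e3, e4, smul_add, smul_smul, smul_smul, smul_smul, hcoeff, neg_smul, neg_add_eq_sub]
  congr 2
  ring

lemma Eact_rainbowVec (hq : q ≠ 0) (hq2 : q - q⁻¹ ≠ 0) : Eact q (2 * N) (rainbowVec q N) = 0 := by
  have hterm (l : ℕ) (hl : l ∈ range (N + 1)) :
      Eact q (2 * N) (rainbowCoeff q N l • tensor (theta q N l) (theta q N (N - l)))
        = rainbowTelescope q N l - rainbowTelescope q N (l + 1) := by
    rw [Eact_smul]
    exact rainbowCoeff_smul_Eact_tensor_theta q N hq hq2 (Nat.lt_succ_iff.mp (mem_range.mp hl))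
  rw [rainbowVec_eq, Eact_smul, Eact_sum, sum_congr rfl hterm, sum_range_sub']
  simp [rainbowTelescope]

lemma Kact_rainbowVec : Kact q (2 * N) (rainbowVec q N) = rainbowVec q N := by
  rw [Kact_of_mem_wtSpace (rainbowVec_mem_wtSpace q N)]
  simp

end Rainbow

/-- The rainbow vector satisfies `E.v_{∩∩_N} = 0` and `K.v_{∩∩_N} = v_{∩∩_N}`,
i.e. it lies in the trivial subrepresentation of `M₂^{⊗2N}`. -/
theorem rainbowVec_highest_weight (q : ℂ) (hq : q ≠ 0)
    (hroot : ∀ n : ℕ, 0 < n → q ^ n ≠ 1) (N : ℕ) :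
    Eact q (2 * N) (rainbowVec q N) = 0 ∧
    Kact q (2 * N) (rainbowVec q N) = rainbowVec q N := by
  have hq2 : q - q⁻¹ ≠ 0 := fun h => hroot 2 two_pos <| by
    field_simp at h
    linear_combination h
  exact ⟨Eact_rainbowVec q N hq hq2, Kact_rainbowVec q N⟩

end
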